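/- arXiv:1208.6155 — 6 statements merged into one kernel-verified Lean document; each statement's English description precedes it below -/
import Mathlib

section
/- Let J = diag(I_m, -I_m), M_d Hermitian, N_b ∈ ℂ^{2m×2n₂}, K = diag(S, S^#) with S unitary, and suppose D = i M_d + (1/2) N_b† J N_b is invertible. Then the matrix K̃ := K - N_b D^{-1} N_b† J K satisfies J K̃† J K̃ = I, i.e., K̃ is a Bogoliubov (symplectic-unitary) matrix. -/
open Matrix

noncomputable section

theorem stmt2 (m n : ℕ)
    (J : Matrix (Fin m ⊕ Fin m) (Fin m ⊕ Fin m) ℂ)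
    (hJ : J = Matrix.fromBlocks 1 0 0 (-1))
    (Md : Matrix (Fin n ⊕ Fin n) (Fin n ⊕ Fin n) ℂ) (hMd : Mdᴴ = Md)
    (Nb : Matrix (Fin m ⊕ Fin m) (Fin n ⊕ Fin n) ℂ)
    (S : Matrix (Fin m) (Fin m) ℂ) (hS : S * Sᴴ = 1) (hS' : Sᴴ * S = 1)
    (K : Matrix (Fin m ⊕ Fin m) (Fin m ⊕ Fin m) ℂ)
    (hK : K = Matrix.fromBlocks S 0 0 (S.map (starRingEnd ℂ)))
    (D : Matrix (Fin n ⊕ Fin n) (Fin n ⊕ Fin n) ℂ)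
    (hD : D = Complex.I • Md + (1/2 : ℂ) • (Nbᴴ * J * Nb))
    (hDU : IsUnit D)
    (Kt : Matrix (Fin m ⊕ Fin m) (Fin m ⊕ Fin m) ℂ)
    (hKt : Kt = K - Nb * D⁻¹ * Nbᴴ * J * K) :
    J * Ktᴴ * J * Kt = 1 := by
  have hdet : IsUnit D.det := (Matrix.isUnit_iff_isUnit_det D).mp hDU
  have hdetH : IsUnit Dᴴ.det := by
    rw [Matrix.det_conjTranspose]; exact hdet.star
  have hD1 : D * D⁻¹ = 1 := Matrix.mul_nonsing_inv D hdet
  have hDH1 : Dᴴ⁻¹ * Dᴴ = 1 := Matrix.nonsing_inv_mul Dᴴ hdetH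
  have hJH : Jᴴ = J := by
    subst hJ
    simp [Matrix.fromBlocks_conjTranspose]
  have hJJ : J * J = 1 := by
    subst hJ
    simp [Matrix.fromBlocks_multiply]
  have hKJK : Kᴴ * J * K = J := by
    subst hJ hK
    have h1 : (S.map (starRingEnd ℂ))ᴴ = Sᵀ := by
      ext i j
      simp [Matrix.conjTranspose_apply, Matrix.map_apply]
    have h2 : Sᵀ * S.map (starRingEnd ℂ) = 1 := by
      have := congrArg (fun A => A.map (starRingEnd ℂ)) hS'
      simpa [Matrix.map_mul, Matrix.conjTranspose_apply, Matrix.map_apply,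
        ← Matrix.ext_iff, Matrix.mul_apply, Matrix.transpose_apply,
        Matrix.one_apply, apply_ite] using this
    simp [Matrix.fromBlocks_conjTranspose, Matrix.fromBlocks_multiply, h1, hS', h2]
  have hDD : Dᴴ + D = Nbᴴ * J * Nb := by
    rw [hD]
    simp only [Matrix.conjTranspose_add, Matrix.conjTranspose_smul,
      Matrix.conjTranspose_mul, Matrix.conjTranspose_conjTranspose, hJH, hMd,
      Matrix.mul_assoc]
    rw [show star Complex.I = -Complex.I from Complex.conj_I,
      show star (1/2 : ℂ) = (1/2 : ℂ) from by simp]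
    module
  have hE' : Nb * Dᴴ⁻¹ * Nbᴴ * J * (Nb * D⁻¹ * Nbᴴ)
      = Nb * D⁻¹ * Nbᴴ + Nb * Dᴴ⁻¹ * Nbᴴ := by
    have h2 : Dᴴ⁻¹ * (Dᴴ + D) * D⁻¹ = D⁻¹ + Dᴴ⁻¹ := by
      rw [mul_add, add_mul, hDH1, one_mul, mul_assoc, hD1, mul_one]
    calc Nb * Dᴴ⁻¹ * Nbᴴ * J * (Nb * D⁻¹ * Nbᴴ)
        = Nb * (Dᴴ⁻¹ * (Dᴴ + D) * D⁻¹) * Nbᴴ := by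
          rw [hDD]; simp only [Matrix.mul_assoc]
      _ = Nb * (D⁻¹ + Dᴴ⁻¹) * Nbᴴ := by rw [h2]
      _ = Nb * D⁻¹ * Nbᴴ + Nb * Dᴴ⁻¹ * Nbᴴ := by
          rw [Matrix.mul_add, Matrix.add_mul]
  set E := Nb * D⁻¹ * Nbᴴ with hEdef
  have hEH : Eᴴ = Nb * Dᴴ⁻¹ * Nbᴴ := by
    rw [hEdef]
    simp only [Matrix.conjTranspose_mul, Matrix.conjTranspose_nonsing_inv,
      Matrix.conjTranspose_conjTranspose, ← Matrix.mul_assoc]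
  have hE : Eᴴ * J * E = E + Eᴴ := by
    rw [hEH, hEdef]; exact hE'
  have hKt2 : Kt = K - E * J * K := by rw [hKt, hEdef]
  have hKtH : Ktᴴ = Kᴴ - Kᴴ * J * Eᴴ := by
    rw [hKt2]
    simp only [Matrix.conjTranspose_sub, Matrix.conjTranspose_mul, hJH, ← mul_assoc]
  have key : Ktᴴ * J * Kt = J := by
    calc Ktᴴ * J * Kt = (Kᴴ - Kᴴ * J * Eᴴ) * J * (K - E * J * K) := by
          rw [hKtH, hKt2]
      _ = Kᴴ * J * K - Kᴴ * J * (E * J * K) - Kᴴ * J * (Eᴴ * J * K)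
            + Kᴴ * J * ((Eᴴ * J * E) * J * K) := by noncomm_ring
      _ = Kᴴ * J * K - Kᴴ * J * (E * J * K) - Kᴴ * J * (Eᴴ * J * K)
            + Kᴴ * J * ((E + Eᴴ) * J * K) := by rw [hE]
      _ = Kᴴ * J * K := by noncomm_ring
      _ = J := hKJK
  calc J * Ktᴴ * J * Kt = J * (Ktᴴ * J * Kt) := by noncomm_ring
    _ = J * J := by rw [key]
    _ = 1 := hJJ
end
end

section
/- Let F be a block matrix [[F_a, F_b],[F_c, F_d]] with F_d invertible, G = [G_a; G_b] (stacked), H = [H_a, H_b], K arbitrary, of compatible dimensions. Define the singularly perturbed transfer function Φ_ε(s) = [H_a, H_b] (sI - [[F_a, F_b],[F_c/ε, F_d/ε]])^{-1} [G_a; G_b/ε] + K and the reduced transfer function Φ₀(s) = H₀ (sI - F₀)^{-1} G₀ + K₀ where F₀ = F_a - F_b F_d^{-1} F_c, G₀ = G_a - F_b F_d^{-1} G_b, H₀ = H_a - H_b F_d^{-1} F_c, K₀ = K - H_b F_d^{-1} G_b. Then for each fixed s that is not an eigenvalue of F₀, Φ_ε(s) → Φ₀(s) as ε → 0⁺. 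-/
open Matrix Filter

noncomputable section

/-! Factoring `ε⁻¹` out of the fast block row gives
`Φ_ε(s) = [Ha Hb] N(ε)⁻¹ [Ga; -Gb] + K` with `N(ε) = [[sI - Fa, -Fb], [Fc, Fd - εsI]]`, which is
continuous in `ε` up to `ε = 0`. The Schur complement of `Fd` in `N(0)` is `sI - F₀`, so `N(0)` is
invertible, inversion is continuous there, and the block-inverse formula evaluates the limit to
`Φ₀(s)`. -/

namespace Matrix

variable {m n p : Type*} [Fintype m] [Fintype n] [DecidableEq m] [DecidableEq n]

theorem fromCols_mul_inv_fromBlocks_mul_fromRows {α l : Type*} [CommRing α]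
    (A : Matrix m m α) (B : Matrix m n α) (C : Matrix n m α) (D : Matrix n n α)
    (H₁ : Matrix l m α) (H₂ : Matrix l n α) (G₁ : Matrix m p α) (G₂ : Matrix n p α)
    (hD : IsUnit D) (hS : IsUnit (A - B * D⁻¹ * C)) :
    fromCols H₁ H₂ * (fromBlocks A B C D)⁻¹ * fromRows G₁ G₂ =
      (H₁ - H₂ * D⁻¹ * C) * (A - B * D⁻¹ * C)⁻¹ * (G₁ - B * D⁻¹ * G₂) + H₂ * D⁻¹ * G₂ := by
  let := hD.invertible
  rw [← invOf_eq_nonsing_inv D] at hS ⊢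
  let := hS.invertible
  let := fromBlocks₂₂Invertible A B C D
  rw [← invOf_eq_nonsing_inv (fromBlocks A B C D), invOf_fromBlocks₂₂_eq,
    fromCols_mul_fromBlocks, fromCols_mul_fromRows, invOf_eq_nonsing_inv (A - B * ⅟D * C)]
  simp only [Matrix.mul_sub, Matrix.sub_mul, Matrix.mul_add, Matrix.add_mul, Matrix.mul_neg,
    Matrix.neg_mul, Matrix.mul_assoc]
  abel

theorem inv_sub_fromBlocks_smul_mul_fromRows_smul {𝕜 : Type*} [Field 𝕜]
    (A : Matrix m m 𝕜) (B : Matrix m n 𝕜) (C : Matrix n m 𝕜) (D : Matrix n n 𝕜)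
    (G₁ : Matrix m p 𝕜) (G₂ : Matrix n p 𝕜) (s : 𝕜) {c : 𝕜} (hc : c ≠ 0) :
    (s • 1 - fromBlocks A B (c • C) (c • D))⁻¹ * fromRows G₁ (c • G₂) =
      (fromBlocks (s • 1 - A) (-B) C (D - c⁻¹ • s • 1))⁻¹ * fromRows G₁ (-G₂) := by
  set P : Matrix (m ⊕ n) (m ⊕ n) 𝕜 := fromBlocks 1 0 0 (-c • 1)
  have hP : IsUnit P.det := by
    simp [P, det_fromBlocks_zero₂₁, det_neg, hc]
  have hsplit : s • 1 - fromBlocks A B (c • C) (c • D) =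
      P * fromBlocks (s • 1 - A) (-B) C (D - c⁻¹ • s • 1) := by
    simp only [P, fromBlocks_multiply, ← fromBlocks_one, fromBlocks_smul, sub_eq_add_neg,
      fromBlocks_neg, fromBlocks_add]
    simp [smul_smul, hc]
  have hG : fromRows G₁ (c • G₂) = P * fromRows G₁ (-G₂) := by
    simp [P, fromBlocks_mul_fromRows]
  rw [hsplit, hG, mul_inv_rev, Matrix.mul_assoc, nonsing_inv_mul_cancel_left _ _ hP]

theorem continuousAt_inv_of_isUnit {𝕜 : Type*} [NormedField 𝕜] {A : Matrix n n 𝕜}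
    (hA : IsUnit A) : ContinuousAt Inv.inv A := by
  refine continuousAt_matrix_inv A ?_
  rw [Ring.inverse_eq_inv']
  exact continuousAt_inv₀ ((isUnit_iff_isUnit_det A).mp hA).ne_zero

end Matrix

theorem stmt10 (n₁ n₂ m : ℕ)
    (Fa : Matrix (Fin n₁) (Fin n₁) ℂ) (Fb : Matrix (Fin n₁) (Fin n₂) ℂ)
    (Fc : Matrix (Fin n₂) (Fin n₁) ℂ) (Fd : Matrix (Fin n₂) (Fin n₂) ℂ)
    (Ga : Matrix (Fin n₁) (Fin m) ℂ) (Gb : Matrix (Fin n₂) (Fin m) ℂ)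
    (Ha : Matrix (Fin m) (Fin n₁) ℂ) (Hb : Matrix (Fin m) (Fin n₂) ℂ)
    (K : Matrix (Fin m) (Fin m) ℂ)
    (hFd : IsUnit Fd)
    (F₀ : Matrix (Fin n₁) (Fin n₁) ℂ) (hF₀ : F₀ = Fa - Fb * Fd⁻¹ * Fc)
    (G₀ : Matrix (Fin n₁) (Fin m) ℂ) (hG₀ : G₀ = Ga - Fb * Fd⁻¹ * Gb)
    (H₀ : Matrix (Fin m) (Fin n₁) ℂ) (hH₀ : H₀ = Ha - Hb * Fd⁻¹ * Fc)
    (K₀ : Matrix (Fin m) (Fin m) ℂ) (hK₀ : K₀ = K - Hb * Fd⁻¹ * Gb)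
    (Φ : ℝ → ℂ → Matrix (Fin m) (Fin m) ℂ)
    (hΦ : ∀ ε : ℝ, ∀ s : ℂ, Φ ε s =
      Matrix.fromCols Ha Hb *
        (s • (1 : Matrix (Fin n₁ ⊕ Fin n₂) (Fin n₁ ⊕ Fin n₂) ℂ) -
          Matrix.fromBlocks Fa Fb ((ε⁻¹ : ℂ) • Fc) ((ε⁻¹ : ℂ) • Fd))⁻¹ *
        Matrix.fromRows Ga ((ε⁻¹ : ℂ) • Gb) + K)
    (Φ₀ : ℂ → Matrix (Fin m) (Fin m) ℂ)
    (hΦ₀ : ∀ s : ℂ, Φ₀ s =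
      H₀ * (s • (1 : Matrix (Fin n₁) (Fin n₁) ℂ) - F₀)⁻¹ * G₀ + K₀)
    (s : ℂ) (hs : IsUnit (s • (1 : Matrix (Fin n₁) (Fin n₁) ℂ) - F₀)) :
    ∀ i j, Tendsto (fun ε : ℝ => Φ ε s i j)
      (nhdsWithin 0 (Set.Ioi 0)) (nhds (Φ₀ s i j)) := by
  set N : ℝ → Matrix (Fin n₁ ⊕ Fin n₂) (Fin n₁ ⊕ Fin n₂) ℂ :=
    fun ε => fromBlocks (s • 1 - Fa) (-Fb) Fc (Fd - (ε : ℂ) • s • 1)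
  set Ψ : ℝ → Matrix (Fin m) (Fin m) ℂ :=
    fun ε => fromCols Ha Hb * (N ε)⁻¹ * fromRows Ga (-Gb) + K
  have hΦΨ : ∀ ε ≠ 0, Φ ε s = Ψ ε := fun ε hε => by
    rw [hΦ, Matrix.mul_assoc, inv_sub_fromBlocks_smul_mul_fromRows_smul _ _ _ _ _ _ _
      (inv_ne_zero (Complex.ofReal_ne_zero.mpr hε)), inv_inv, ← Matrix.mul_assoc]
  have hN₀ : N 0 = fromBlocks (s • 1 - Fa) (-Fb) Fc Fd := by
    simp [N]
  have hschur : s • 1 - Fa - -Fb * Fd⁻¹ * Fc = s • 1 - F₀ := by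
    rw [hF₀, Matrix.neg_mul, Matrix.neg_mul]
    abel
  have hΨ₀ : Ψ 0 = Φ₀ s := by
    rw [hΦ₀, hH₀, hG₀, hK₀, ← hschur]
    simp only [Ψ, hN₀]
    rw [fromCols_mul_inv_fromBlocks_mul_fromRows _ _ _ _ _ _ _ _ hFd (hschur ▸ hs)]
    simp only [Matrix.neg_mul, Matrix.mul_neg, neg_neg, sub_neg_eq_add]
    abel
  have hΨcont : ContinuousAt Ψ 0 := by
    have hN₀unit : IsUnit (N 0) := by
      let := hFd.invertible
      rwa [hN₀, isUnit_fromBlocks_iff_of_invertible₂₂, invOf_eq_nonsing_inv, hschur]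
    have hN : Continuous N := by fun_prop
    have hΨN : Continuous fun X : Matrix (Fin n₁ ⊕ Fin n₂) (Fin n₁ ⊕ Fin n₂) ℂ =>
      fromCols Ha Hb * X * fromRows Ga (-Gb) + K := by fun_prop
    exact hΨN.continuousAt.comp ((continuousAt_inv_of_isUnit hN₀unit).comp hN.continuousAt)
  have hlim : Tendsto (fun ε => Φ ε s) (nhdsWithin 0 (Set.Ioi 0)) (nhds (Φ₀ s)) := by
    rw [← hΨ₀]
    refine (hΨcont.tendsto.mono_left nhdsWithin_le_nhds).congr' ?_
    filter_upwards [self_mem_nhdsWithin] with ε hε using (hΦΨ ε (ne_of_gt hε)).symm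
  exact fun i j => tendsto_pi_nhds.mp (tendsto_pi_nhds.mp hlim i) j
end
end

section
/- Let J = diag(I, -I), M_d Hermitian, N_b arbitrary, with D₊ = i M_d + (1/2) N_b† J N_b and D₋ = -i M_d + (1/2) N_b† J N_b invertible. Then (I - J N_b D₋^{-1} N_b†)(I - J N_b D₊^{-1} N_b†) = I. -/
open Matrix

noncomputable section

theorem stmt11 (m n : ℕ)
    (J : Matrix (Fin m ⊕ Fin m) (Fin m ⊕ Fin m) ℂ)
    (hJ : J = Matrix.fromBlocks 1 0 0 (-1))
    (Md : Matrix (Fin n ⊕ Fin n) (Fin n ⊕ Fin n) ℂ) (hMd : Mdᴴ = Md)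
    (Nb : Matrix (Fin m ⊕ Fin m) (Fin n ⊕ Fin n) ℂ)
    (Dp Dm : Matrix (Fin n ⊕ Fin n) (Fin n ⊕ Fin n) ℂ)
    (hDp : Dp = Complex.I • Md + (1/2 : ℂ) • (Nbᴴ * J * Nb))
    (hDm : Dm = (-Complex.I) • Md + (1/2 : ℂ) • (Nbᴴ * J * Nb))
    (hDpU : IsUnit Dp) (hDmU : IsUnit Dm) :
    (1 - J * Nb * Dm⁻¹ * Nbᴴ) * (1 - J * Nb * Dp⁻¹ * Nbᴴ) = 1 := by
  have hp1 : Dp * Dp⁻¹ = 1 :=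
    Matrix.mul_nonsing_inv _ ((Matrix.isUnit_iff_isUnit_det _).mp hDpU)
  have hm1 : Dm⁻¹ * Dm = 1 :=
    Matrix.nonsing_inv_mul _ ((Matrix.isUnit_iff_isUnit_det _).mp hDmU)
  have hsum : Nbᴴ * J * Nb = Dp + Dm := by
    rw [hDp, hDm]
    module
  have key : J * Nb * Dm⁻¹ * Nbᴴ * (J * Nb * Dp⁻¹ * Nbᴴ)
      = J * Nb * Dm⁻¹ * Nbᴴ + J * Nb * Dp⁻¹ * Nbᴴ := by
    have : J * Nb * Dm⁻¹ * Nbᴴ * (J * Nb * Dp⁻¹ * Nbᴴ)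
        = J * Nb * (Dm⁻¹ * (Nbᴴ * J * Nb) * Dp⁻¹) * Nbᴴ := by
      simp only [Matrix.mul_assoc]
    rw [this, hsum]
    have : Dm⁻¹ * (Dp + Dm) * Dp⁻¹ = Dm⁻¹ + Dp⁻¹ := by
      rw [mul_add, add_mul, Matrix.mul_assoc Dm⁻¹ Dp Dp⁻¹, hp1, hm1,
        Matrix.mul_one, Matrix.one_mul]
    rw [this, Matrix.mul_add, Matrix.add_mul]
  rw [mul_sub, sub_mul, sub_mul, Matrix.one_mul, Matrix.mul_one, key]
  simp [Matrix.one_mul]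
end
end

section
/- Under the hypotheses that J = diag(I,-I), M_b, M_c, M_d Hermitian-compatible matrices with M_c = M_b† (i.e., M = [[M_a, M_b],[M_c, M_d]] Hermitian so M_c = M_b†, M_a† = M_a, M_d† = M_d), N_a, N_b coupling matrices, K = diag(S, S^#) with S unitary, and D₊ = i M_d + (1/2) N_b† J N_b invertible with D₋ = D₊† also invertible: define G₀ = -J N_a† J K + J(i M_b + (1/2) N_a† J N_b) D₊^{-1} N_b† J K and Ñ = N_a - N_b D₊^{-1} (i M_c + (1/2) N_b† J N_a) and K̃ = K - N_b D₊^{-1} N_b† J K. Then G₀ = -J Ñ† J K̃. -/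
open Matrix

noncomputable section

set_option maxHeartbeats 1000000 in
theorem stmt12 (m n₁ n₂ : ℕ)
    (Jm : Matrix (Fin m ⊕ Fin m) (Fin m ⊕ Fin m) ℂ)
    (hJm : Jm = Matrix.fromBlocks 1 0 0 (-1))
    (Jn : Matrix (Fin n₁ ⊕ Fin n₁) (Fin n₁ ⊕ Fin n₁) ℂ)
    (hJn : Jn = Matrix.fromBlocks 1 0 0 (-1))
    (Mb : Matrix (Fin n₁ ⊕ Fin n₁) (Fin n₂ ⊕ Fin n₂) ℂ)
    (Mc : Matrix (Fin n₂ ⊕ Fin n₂) (Fin n₁ ⊕ Fin n₁) ℂ) (hMc : Mc = Mbᴴ)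
    (Md : Matrix (Fin n₂ ⊕ Fin n₂) (Fin n₂ ⊕ Fin n₂) ℂ) (hMd : Mdᴴ = Md)
    (Na : Matrix (Fin m ⊕ Fin m) (Fin n₁ ⊕ Fin n₁) ℂ)
    (Nb : Matrix (Fin m ⊕ Fin m) (Fin n₂ ⊕ Fin n₂) ℂ)
    (S : Matrix (Fin m) (Fin m) ℂ) (hS : S * Sᴴ = 1)
    (K : Matrix (Fin m ⊕ Fin m) (Fin m ⊕ Fin m) ℂ)
    (hK : K = Matrix.fromBlocks S 0 0 (S.map (starRingEnd ℂ)))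
    (Dp Dm : Matrix (Fin n₂ ⊕ Fin n₂) (Fin n₂ ⊕ Fin n₂) ℂ)
    (hDp : Dp = Complex.I • Md + (1/2 : ℂ) • (Nbᴴ * Jm * Nb))
    (hDm : Dm = (-Complex.I) • Md + (1/2 : ℂ) • (Nbᴴ * Jm * Nb))
    (hDpU : IsUnit Dp) (hDmU : IsUnit Dm)
    (G₀ : Matrix (Fin n₁ ⊕ Fin n₁) (Fin m ⊕ Fin m) ℂ)
    (hG₀ : G₀ = -(Jn * Naᴴ * Jm * K) +
      Jn * (Complex.I • Mb + (1/2 : ℂ) • (Naᴴ * Jm * Nb)) * Dp⁻¹ * Nbᴴ * Jm * K)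
    (Nt : Matrix (Fin m ⊕ Fin m) (Fin n₁ ⊕ Fin n₁) ℂ)
    (hNt : Nt = Na - Nb * Dp⁻¹ * (Complex.I • Mc + (1/2 : ℂ) • (Nbᴴ * Jm * Na)))
    (Kt : Matrix (Fin m ⊕ Fin m) (Fin m ⊕ Fin m) ℂ)
    (hKt : Kt = K - Nb * Dp⁻¹ * Nbᴴ * Jm * K) :
    G₀ = -(Jn * Ntᴴ * Jm * Kt) := by
  have hJmH : Jmᴴ = Jm := by
    rw [hJm]; simp [Matrix.fromBlocks_conjTranspose]
  have hDH : Dpᴴ = Dm := by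
    rw [hDp, hDm]
    simp [Matrix.conjTranspose_add, Matrix.conjTranspose_smul, hMd,
      Matrix.conjTranspose_mul, Matrix.mul_assoc, hJmH, Complex.conj_I]
  have hDpd : IsUnit Dp.det := (Matrix.isUnit_iff_isUnit_det Dp).mp hDpU
  have hDmd : IsUnit Dm.det := (Matrix.isUnit_iff_isUnit_det Dm).mp hDmU
  have hinv : (Dp⁻¹)ᴴ = Dm⁻¹ := by rw [Matrix.conjTranspose_nonsing_inv, hDH]
  have hsum : Nbᴴ * Jm * Nb = Dp + Dm := by
    rw [hDp, hDm]; module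
  have h1 : Dm⁻¹ * Dp * Dp⁻¹ = Dm⁻¹ := by
    rw [Matrix.mul_assoc, Matrix.mul_nonsing_inv _ hDpd, mul_one]
  have h2 : Dm⁻¹ * Dm * Dp⁻¹ = Dp⁻¹ := by
    rw [Matrix.nonsing_inv_mul _ hDmd, one_mul]
  have hkey : Dm⁻¹ * (Nbᴴ * Jm * Nb) * Dp⁻¹ = Dp⁻¹ + Dm⁻¹ := by
    rw [hsum, mul_add, add_mul, h1, h2, add_comm]
  have hhalf : (starRingEnd ℂ) (1/2 : ℂ) = 1/2 := by
    rw [map_div₀, _root_.map_one, Complex.conj_ofNat]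
  have hCH : (Complex.I • Mbᴴ + (1/2 : ℂ) • (Nbᴴ * Jm * Na))ᴴ
      = (-Complex.I) • Mb + (1/2 : ℂ) • (Naᴴ * (Jm * Nb)) := by
    simp only [Matrix.conjTranspose_add, Matrix.conjTranspose_smul,
      Matrix.conjTranspose_mul, Matrix.conjTranspose_conjTranspose, hJmH,
      Matrix.mul_assoc, Complex.star_def, Complex.conj_I, hhalf]
  have hNtH : Ntᴴ = Naᴴ -
      ((-Complex.I) • Mb + (1/2 : ℂ) • (Naᴴ * (Jm * Nb))) * (Dm⁻¹ * Nbᴴ) := by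
    rw [hNt, hMc, Matrix.conjTranspose_sub, Matrix.conjTranspose_mul,
      Matrix.conjTranspose_mul, hinv, hCH]
  rw [hG₀, hKt, hNtH]
  have expand : -(Jn * (Naᴴ - ((-Complex.I) • Mb + (1/2 : ℂ) • (Naᴴ * (Jm * Nb))) * (Dm⁻¹ * Nbᴴ)) * Jm *
      (K - Nb * Dp⁻¹ * Nbᴴ * Jm * K)) =
      -(Jn * Naᴴ * Jm * K)
      + Jn * (Naᴴ * (Jm * (Nb * (Dp⁻¹ * (Nbᴴ * (Jm * K))))))
      + Jn * (((-Complex.I) • Mb + (1/2 : ℂ) • (Naᴴ * (Jm * Nb))) * (Dm⁻¹ * (Nbᴴ * (Jm * K))))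
      - Jn * (((-Complex.I) • Mb + (1/2 : ℂ) • (Naᴴ * (Jm * Nb))) *
          ((Dm⁻¹ * (Nbᴴ * Jm * Nb) * Dp⁻¹) * (Nbᴴ * (Jm * K)))) := by
    simp only [Matrix.mul_sub, Matrix.sub_mul, Matrix.mul_assoc]
    abel
  rw [expand, hkey]
  simp only [Matrix.mul_add, Matrix.add_mul, Matrix.sub_mul, Matrix.mul_smul,
    Matrix.smul_mul, Matrix.mul_assoc, neg_smul, Matrix.neg_mul, Matrix.mul_neg,
    smul_add, smul_sub, smul_smul]
  module
end
end

section
/- Let Θ = J = diag(I,-I), M Hermitian of doubled-up form, N of doubled-up form, S unitary, and define F = -iJM - (1/2) J N† J N, G = -J N† J K, H = N, K = diag(S, S^#). Then the transfer function Γ(s) = H (sI - F)^{-1} G + K satisfies the identity J F + F† J + N† J N = 0 and consequently Γ(iω)† J Γ(iω) = J for all real ω such that iω is not an eigenvalue of F. -/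
open Matrix

noncomputable section

theorem stmt14 (n m : ℕ)
    (Jn : Matrix (Fin n ⊕ Fin n) (Fin n ⊕ Fin n) ℂ)
    (hJn : Jn = Matrix.fromBlocks 1 0 0 (-1))
    (Jm : Matrix (Fin m ⊕ Fin m) (Fin m ⊕ Fin m) ℂ)
    (hJm : Jm = Matrix.fromBlocks 1 0 0 (-1))
    (Sgn : Matrix (Fin n ⊕ Fin n) (Fin n ⊕ Fin n) ℂ)
    (hSgn : Sgn = Matrix.fromBlocks 0 1 1 0)
    (Sgm : Matrix (Fin m ⊕ Fin m) (Fin m ⊕ Fin m) ℂ)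
    (hSgm : Sgm = Matrix.fromBlocks 0 1 1 0)
    (M : Matrix (Fin n ⊕ Fin n) (Fin n ⊕ Fin n) ℂ)
    (hM : Mᴴ = M) (hMdu : M = Sgn * (M.map (starRingEnd ℂ)) * Sgn)
    (N : Matrix (Fin m ⊕ Fin m) (Fin n ⊕ Fin n) ℂ)
    (hNdu : N = Sgm * (N.map (starRingEnd ℂ)) * Sgn)
    (S : Matrix (Fin m) (Fin m) ℂ) (hS : S * Sᴴ = 1) (hS' : Sᴴ * S = 1)
    (K : Matrix (Fin m ⊕ Fin m) (Fin m ⊕ Fin m) ℂ)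
    (hK : K = Matrix.fromBlocks S 0 0 (S.map (starRingEnd ℂ)))
    (F : Matrix (Fin n ⊕ Fin n) (Fin n ⊕ Fin n) ℂ)
    (hF : F = -(Complex.I • (Jn * M)) - (1/2 : ℂ) • (Jn * Nᴴ * Jm * N))
    (G : Matrix (Fin n ⊕ Fin n) (Fin m ⊕ Fin m) ℂ)
    (hG : G = -(Jn * Nᴴ * Jm * K))
    (Γ : ℂ → Matrix (Fin m ⊕ Fin m) (Fin m ⊕ Fin m) ℂ)
    (hΓ : ∀ s : ℂ, Γ s =
      N * (s • (1 : Matrix (Fin n ⊕ Fin n) (Fin n ⊕ Fin n) ℂ) - F)⁻¹ * G + K) :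
    Jn * F + Fᴴ * Jn + Nᴴ * Jm * N = 0 ∧
    ∀ ω : ℝ,
      IsUnit ((Complex.I * ω) • (1 : Matrix (Fin n ⊕ Fin n) (Fin n ⊕ Fin n) ℂ) - F) →
      (Γ (Complex.I * ω))ᴴ * Jm * Γ (Complex.I * ω) = Jm := by
  have hJn2 : Jn * Jn = 1 := by
    rw [hJn]; simp [Matrix.fromBlocks_multiply, ← Matrix.fromBlocks_one]
  have hJnH : Jnᴴ = Jn := by
    rw [hJn]; simp [Matrix.fromBlocks_conjTranspose]
  have hJm2 : Jm * Jm = 1 := by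
    rw [hJm]; simp [Matrix.fromBlocks_multiply, ← Matrix.fromBlocks_one]
  have hJmH : Jmᴴ = Jm := by
    rw [hJm]; simp [Matrix.fromBlocks_conjTranspose]
  have hmapH : (S.map (starRingEnd ℂ))ᴴ * (S.map (starRingEnd ℂ)) = 1 := by
    have h : (S.map (starRingEnd ℂ))ᴴ * (S.map (starRingEnd ℂ))
        = (Sᴴ * S).map (starRingEnd ℂ) := by
      ext i j
      simp [Matrix.mul_apply, Matrix.conjTranspose_apply, map_sum, mul_comm]
    rw [h, hS']
    exact Matrix.map_one _ (map_zero _) (map_one _)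
  have hKJK : Kᴴ * Jm * K = Jm := by
    rw [hK, hJm]
    simp [Matrix.fromBlocks_conjTranspose, Matrix.fromBlocks_multiply, hS', hmapH]
  -- Part 1
  have hJnF : Jn * F = -(Complex.I • M) - (1/2:ℂ) • (Nᴴ * Jm * N) := by
    rw [hF]
    simp only [Matrix.mul_sub, Matrix.mul_neg, Matrix.mul_smul, ← Matrix.mul_assoc,
      hJn2, Matrix.one_mul]
  have hFH : Fᴴ = Complex.I • (M * Jn) - (1/2:ℂ) • (Nᴴ * Jm * N * Jn) := by
    rw [hF]
    simp [Matrix.conjTranspose_sub, Matrix.conjTranspose_neg, Matrix.conjTranspose_smul,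
      Matrix.conjTranspose_mul, hJnH, hJmH, hM, Complex.star_def, Complex.conj_I,
      Matrix.mul_assoc]
  have hFHJ : Fᴴ * Jn = Complex.I • M - (1/2:ℂ) • (Nᴴ * Jm * N) := by
    rw [hFH, Matrix.sub_mul, Matrix.smul_mul, Matrix.smul_mul,
      Matrix.mul_assoc M, hJn2, Matrix.mul_one,
      Matrix.mul_assoc (Nᴴ * Jm * N), hJn2, Matrix.mul_one]
  have hpart1 : Jn * F + Fᴴ * Jn + Nᴴ * Jm * N = 0 := by
    rw [hJnF, hFHJ]
    module
  refine ⟨hpart1, ?_⟩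
  intro ω hu
  set s : ℂ := Complex.I * (ω:ℂ) with hs
  have hsc : star s = -s := by
    rw [hs]
    simp [Complex.star_def, Complex.conj_I]
  rw [hΓ]
  set Φ : Matrix (Fin n ⊕ Fin n) (Fin n ⊕ Fin n) ℂ :=
    (s • (1 : Matrix (Fin n ⊕ Fin n) (Fin n ⊕ Fin n) ℂ) - F)⁻¹ with hΦdef
  have hud : IsUnit (s • (1 : Matrix (Fin n ⊕ Fin n) (Fin n ⊕ Fin n) ℂ) - F).det :=
    (Matrix.isUnit_iff_isUnit_det _).mp hu
  have h1 : (s • (1 : Matrix (Fin n ⊕ Fin n) (Fin n ⊕ Fin n) ℂ) - F) * Φ = 1 :=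
    Matrix.mul_nonsing_inv _ hud
  have h2 : Φ * (s • (1 : Matrix (Fin n ⊕ Fin n) (Fin n ⊕ Fin n) ℂ) - F) = 1 :=
    Matrix.nonsing_inv_mul _ hud
  have hFΦ : F * Φ = s • Φ - 1 := by
    rw [Matrix.sub_mul, Matrix.smul_mul, Matrix.one_mul] at h1
    rw [← h1]; abel
  have hΦF : Φ * F = s • Φ - 1 := by
    rw [Matrix.mul_sub, Matrix.mul_smul, Matrix.mul_one] at h2
    rw [← h2]; abel
  have hΦHFH : Φᴴ * Fᴴ = (-s) • Φᴴ - 1 := by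
    have h := congrArg Matrix.conjTranspose hFΦ
    simpa [Matrix.conjTranspose_mul, Matrix.conjTranspose_sub,
      Matrix.conjTranspose_smul, hsc] using h
  have hΦHFH' : ∀ Y : Matrix (Fin n ⊕ Fin n) (Fin n ⊕ Fin n) ℂ,
      Φᴴ * (Fᴴ * Y) = (-s) • (Φᴴ * Y) - Y := by
    intro Y
    rw [← Matrix.mul_assoc, hΦHFH, Matrix.sub_mul, Matrix.smul_mul, Matrix.one_mul]
  have hΦHFH'' : ∀ Y : Matrix (Fin n ⊕ Fin n) (Fin m ⊕ Fin m) ℂ,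
      Φᴴ * (Fᴴ * Y) = (-s) • (Φᴴ * Y) - Y := by
    intro Y
    rw [← Matrix.mul_assoc, hΦHFH, Matrix.sub_mul, Matrix.smul_mul, Matrix.one_mul]
  have hFΦ' : ∀ Y : Matrix (Fin n ⊕ Fin n) (Fin m ⊕ Fin m) ℂ,
      F * (Φ * Y) = s • (Φ * Y) - Y := by
    intro Y
    rw [← Matrix.mul_assoc, hFΦ, Matrix.sub_mul, Matrix.smul_mul, Matrix.one_mul]
  have hX : Nᴴ * Jm * N = -(Jn * F) - Fᴴ * Jn := by
    have h := eq_neg_of_add_eq_zero_right hpart1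
    rw [h]; abel
  -- key identity
  have hkey : ∀ Y : Matrix (Fin n ⊕ Fin n) (Fin m ⊕ Fin m) ℂ,
      Φᴴ * (Nᴴ * (Jm * (N * (Φ * Y)))) = Φᴴ * (Jn * Y) + Jn * (Φ * Y) := by
    intro Y
    have e1 : Nᴴ * (Jm * (N * (Φ * Y))) = (-(Jn * F) - Fᴴ * Jn) * (Φ * Y) := by
      rw [← Matrix.mul_assoc, ← Matrix.mul_assoc, hX]
    rw [e1, Matrix.sub_mul, Matrix.neg_mul, Matrix.mul_sub, Matrix.mul_neg,
      Matrix.mul_assoc Jn F, hFΦ', Matrix.mul_assoc Fᴴ Jn, hΦHFH'']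
    simp only [Matrix.mul_sub, Matrix.mul_smul, Matrix.mul_assoc]
    module
  have hNJmK : Nᴴ * (Jm * K) = -(Jn * G) := by
    rw [hG]
    simp only [Matrix.mul_neg, neg_neg, ← Matrix.mul_assoc, hJn2, Matrix.one_mul]
  have hGH : Gᴴ = -(Kᴴ * Jm * N * Jn) := by
    rw [hG]
    simp [Matrix.conjTranspose_neg, Matrix.conjTranspose_mul, hJnH, hJmH,
      Matrix.mul_assoc]
  have hb0 : Kᴴ * Jm * N = -(Gᴴ * Jn) := by
    rw [hGH]
    simp only [Matrix.neg_mul, neg_neg, Matrix.mul_assoc, hJn2, Matrix.mul_one]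
  have hKJmN : ∀ Y : Matrix (Fin n ⊕ Fin n) (Fin m ⊕ Fin m) ℂ,
      Kᴴ * (Jm * (N * Y)) = -(Gᴴ * (Jn * Y)) := by
    intro Y
    calc Kᴴ * (Jm * (N * Y)) = (Kᴴ * Jm * N) * Y := by
          simp only [Matrix.mul_assoc]
      _ = -(Gᴴ * (Jn * Y)) := by
          rw [hb0]; simp only [Matrix.neg_mul, Matrix.mul_assoc]
  have hKJK' : Kᴴ * (Jm * K) = Jm := by
    rw [← Matrix.mul_assoc, hKJK]
  simp only [Matrix.conjTranspose_add, Matrix.conjTranspose_mul, Matrix.add_mul,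
    Matrix.mul_add, Matrix.mul_assoc, hkey, hNJmK, hKJmN, hKJK']
  simp only [Matrix.mul_add, Matrix.mul_neg]
  abel
end
end

section
/- Let D₊ = i M_d + (1/2) N_b† J N_b with M_d Hermitian and suppose D₊ is invertible. Then D₊† = -i M_d + (1/2) N_b† J N_b = D₋, and the 'reflection' matrix P := I - J N_b D₊^{-1} N_b† satisfies P^{-1} = I - J N_b D₋^{-1} N_b†. -/
open Matrix

noncomputable section

lemma helper19 {k l : Type*} [Fintype k] [Fintype l] [DecidableEq k] [DecidableEq l]
    (A : Matrix k l ℂ) (B : Matrix l k ℂ) (Dp Dm : Matrix l l ℂ)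
    (hBA : B * A = Dp + Dm) (hp : IsUnit Dp.det) (hm : IsUnit Dm.det) :
    (1 - A * Dp⁻¹ * B) * (1 - A * Dm⁻¹ * B) = 1 := by
  have e1 : Dp⁻¹ * (Dp + Dm) * Dm⁻¹ = Dm⁻¹ + Dp⁻¹ := by
    simp [Matrix.mul_add, Matrix.add_mul, Matrix.nonsing_inv_mul _ hp, Matrix.mul_assoc,
      Matrix.mul_nonsing_inv _ hm, add_comm]
  have e2 : A * Dp⁻¹ * B * (A * Dm⁻¹ * B) = A * Dm⁻¹ * B + A * Dp⁻¹ * B := by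
    calc A * Dp⁻¹ * B * (A * Dm⁻¹ * B) = A * (Dp⁻¹ * (B * A) * Dm⁻¹) * B := by
          simp only [Matrix.mul_assoc]
      _ = A * (Dm⁻¹ + Dp⁻¹) * B := by rw [hBA, e1]
      _ = _ := by rw [Matrix.mul_add, Matrix.add_mul]
  simp only [Matrix.mul_sub, Matrix.sub_mul, Matrix.mul_one, Matrix.one_mul, e2]
  abel

theorem stmt19 (m n : ℕ)
    (J : Matrix (Fin m ⊕ Fin m) (Fin m ⊕ Fin m) ℂ)
    (hJ : J = Matrix.fromBlocks 1 0 0 (-1))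
    (Md : Matrix (Fin n ⊕ Fin n) (Fin n ⊕ Fin n) ℂ) (hMd : Mdᴴ = Md)
    (Nb : Matrix (Fin m ⊕ Fin m) (Fin n ⊕ Fin n) ℂ)
    (Dp Dm : Matrix (Fin n ⊕ Fin n) (Fin n ⊕ Fin n) ℂ)
    (hDp : Dp = Complex.I • Md + (1/2 : ℂ) • (Nbᴴ * J * Nb))
    (hDm : Dm = (-Complex.I) • Md + (1/2 : ℂ) • (Nbᴴ * J * Nb))
    (hDpU : IsUnit Dp) (hDmU : IsUnit Dm)
    (P : Matrix (Fin m ⊕ Fin m) (Fin m ⊕ Fin m) ℂ)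
    (hP : P = 1 - J * Nb * Dp⁻¹ * Nbᴴ) :
    Dpᴴ = Dm ∧ P⁻¹ = 1 - J * Nb * Dm⁻¹ * Nbᴴ := by
  have hJH : Jᴴ = J := by
    subst hJ
    simp [Matrix.fromBlocks_conjTranspose]
  have h1 : Dpᴴ = Dm := by
    rw [hDp, hDm]
    simp [conjTranspose_add, conjTranspose_smul, hMd, conjTranspose_mul, hJH,
      Matrix.mul_assoc, Complex.conj_I]
  refine ⟨h1, ?_⟩
  have hp : IsUnit Dp.det := (Matrix.isUnit_iff_isUnit_det Dp).mp hDpU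
  have hm : IsUnit Dm.det := (Matrix.isUnit_iff_isUnit_det Dm).mp hDmU
  have hBA : Nbᴴ * (J * Nb) = Dp + Dm := by
    rw [hDp, hDm, ← Matrix.mul_assoc]
    module
  have key : P * (1 - J * Nb * Dm⁻¹ * Nbᴴ) = 1 := by
    rw [hP]
    have := helper19 (J * Nb) Nbᴴ Dp Dm hBA hp hm
    simpa [Matrix.mul_assoc] using this
  exact Matrix.inv_eq_right_inv key
end
end
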